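/- Let ω : ℝⁿ → ℝ be bounded and continuous and let U ⊆ ℝⁿ be open. Set σ(ε) = C ε^{1/2} with C = (2‖ω‖_{L∞(ℝⁿ)})^{1/2} and U_{σ(ε)} = {x ∈ U : dist(x, ∂U) > σ(ε)}. If ω is a weak subsolution of F(γ D²ω γ) = 1 in U, then for every ε > 0 the sup-convolution ω^ε is a weak subsolution of the same equation in U_{σ(ε)}. Similarly, if ω is a weak supersolution in U, then the inf-convolution ω_ε is a weak supersolution in U_{σ(ε)}. -/

import Mathlib

noncomputable section
open scoped Classical
open Matrix Set Filter

variable {n : ℕ}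

/-- Squared Euclidean norm of a vector in `ℝⁿ`. -/
def sqNorm (p : Fin n → ℝ) : ℝ := ∑ i, p i ^ 2

/-- Euclidean norm of a vector in `ℝⁿ`. -/
def eucNorm (p : Fin n → ℝ) : ℝ := Real.sqrt (sqNorm p)

/-- `γ_p = I − p pᵀ/|p|²` for `p ≠ 0`. -/
def gammaP (p : Fin n → ℝ) : Matrix (Fin n) (Fin n) ℝ :=
  1 - (sqNorm p)⁻¹ • Matrix.vecMulVec p p

/-- `γ_η = I − η ηᵀ`. -/
def gammaE (η : Fin n → ℝ) : Matrix (Fin n) (Fin n) ℝ :=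
  1 - Matrix.vecMulVec η η

/-- `γ M γ`, i.e. the matrix with entries `γ^{ik} M_{kl} γ^{lj}`. -/
def conjM (g M : Matrix (Fin n) (Fin n) ℝ) : Matrix (Fin n) (Fin n) ℝ := g * M * g

/-- `F(A) = f(κ(A))` where `κ(A)` is the eigenvalue vector of the symmetric matrix `A`
(junk value `0` if `A` is not symmetric). -/
def Fof (f : (Fin n → ℝ) → ℝ) (A : Matrix (Fin n) (Fin n) ℝ) : ℝ :=
  if h : A.IsHermitian then f h.eigenvalues else 0

/-- The eigenvalue vector of `A` lies in `K`. -/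
def eigIn (K : Set (Fin n → ℝ)) (A : Matrix (Fin n) (Fin n) ℝ) : Prop :=
  ∃ h : A.IsHermitian, h.eigenvalues ∈ K

/-- Gradient of a function on `ℝⁿ`. -/
def gradv (ψ : (Fin n → ℝ) → ℝ) (x : Fin n → ℝ) : Fin n → ℝ := fun i =>
  fderiv ℝ ψ x (Pi.single i 1)

/-- Hessian matrix of a function on `ℝⁿ`. -/
def hessv (ψ : (Fin n → ℝ) → ℝ) (x : Fin n → ℝ) : Matrix (Fin n) (Fin n) ℝ :=
  Matrix.of fun i j => fderiv ℝ (fun y => fderiv ℝ ψ y (Pi.single j 1)) x (Pi.single i 1)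

/-- `K ⊂ ℝⁿ` is an open symmetric convex cone whose closure strictly contains the closed
positive cone. -/
def GoodCone (K : Set (Fin n → ℝ)) : Prop :=
  IsOpen K ∧ Convex ℝ K ∧ (∀ c : ℝ, 0 < c → ∀ κ ∈ K, c • κ ∈ K) ∧
  (∀ σ : Equiv.Perm (Fin n), ∀ κ ∈ K, (κ ∘ σ) ∈ K) ∧
  {κ : Fin n → ℝ | ∀ i, 0 ≤ κ i} ⊆ closure K ∧
  {κ : Fin n → ℝ | ∀ i, 0 ≤ κ i} ≠ closure K

/-- The structure conditions on the curvature function `f` : smooth and symmetric on `K`,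
strictly increasing in each variable, concave, positive in `K`, vanishing on `∂K`,
normalized, and positively homogeneous of degree one. -/
def GoodF (K : Set (Fin n → ℝ)) (f : (Fin n → ℝ) → ℝ) : Prop :=
  ContDiffOn ℝ (⊤ : ℕ∞) f K ∧
  (∀ σ : Equiv.Perm (Fin n), ∀ κ, f (κ ∘ σ) = f κ) ∧
  (∀ κ ∈ K, ∀ i, 0 < fderiv ℝ f κ (Pi.single i 1)) ∧
  ConcaveOn ℝ K f ∧
  (∀ κ ∈ K, 0 < f κ) ∧
  (∀ κ ∈ frontier K, f κ = 0) ∧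
  f (fun _ => 1) = 1 ∧
  (∀ c : ℝ, 0 < c → ∀ κ ∈ K, f (c • κ) = c * f κ)

/-- Euclidean distance from a point to a set (defined via `sInf`). -/
def eInfDist (x : Fin n → ℝ) (s : Set (Fin n → ℝ)) : ℝ :=
  sInf {r | ∃ y ∈ s, r = eucNorm (x - y)}

/-- A smooth function `φ` on `ℝⁿ` is admissible on an open set `D`. -/
def EAdmissible (K : Set (Fin n → ℝ)) (f : (Fin n → ℝ) → ℝ)
    (φ : (Fin n → ℝ) → ℝ) (D : Set (Fin n → ℝ)) : Prop :=
  ContDiff ℝ (⊤ : ℕ∞) φ ∧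
  ∀ x ∈ D,
    (gradv φ x ≠ 0 →
      eigIn K (conjM (gammaP (gradv φ x)) (hessv φ x)) ∧
      0 < Fof f (conjM (gammaP (gradv φ x)) (hessv φ x))) ∧
    (gradv φ x = 0 →
      ∃ η : Fin n → ℝ, eucNorm η ≤ 1 ∧
        eigIn K (conjM (gammaE η) (hessv φ x)) ∧
        0 < Fof f (conjM (gammaE η) (hessv φ x)))

/-- Weak subsolution of the stationary equation `F(γ_{Dv} D²v γ_{Dv}) = 1` in `U`. -/
def EWeakSub (K : Set (Fin n → ℝ)) (f : (Fin n → ℝ) → ℝ)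
    (U : Set (Fin n → ℝ)) (v : (Fin n → ℝ) → ℝ) : Prop :=
  ContinuousOn v U ∧
  ∀ D : Set (Fin n → ℝ), IsOpen D → D ⊆ U → ∀ φ, EAdmissible K f φ D →
    ∀ x₀ ∈ D, IsLocalMax (fun x => v x - φ x) x₀ →
      (gradv φ x₀ ≠ 0 → 1 ≤ Fof f (conjM (gammaP (gradv φ x₀)) (hessv φ x₀))) ∧
      (gradv φ x₀ = 0 →
        ∃ η : Fin n → ℝ, eucNorm η ≤ 1 ∧ 1 ≤ Fof f (conjM (gammaE η) (hessv φ x₀)))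

/-- Weak supersolution of the stationary equation `F(γ_{Dv} D²v γ_{Dv}) = 1` in `U`. -/
def EWeakSuper (K : Set (Fin n → ℝ)) (f : (Fin n → ℝ) → ℝ)
    (U : Set (Fin n → ℝ)) (v : (Fin n → ℝ) → ℝ) : Prop :=
  ContinuousOn v U ∧
  ∀ D : Set (Fin n → ℝ), IsOpen D → D ⊆ U → ∀ φ, EAdmissible K f φ D →
    ∀ x₀ ∈ D, IsLocalMin (fun x => v x - φ x) x₀ →
      (gradv φ x₀ ≠ 0 → Fof f (conjM (gammaP (gradv φ x₀)) (hessv φ x₀)) ≤ 1) ∧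
      (gradv φ x₀ = 0 →
        ∃ η : Fin n → ℝ, eucNorm η ≤ 1 ∧ Fof f (conjM (gammaE η) (hessv φ x₀)) ≤ 1)

/-- Sup-convolution `ω^ε(x) = sup_y (ω(y) − ε⁻¹|x − y|²)`. -/
def supConv (ε : ℝ) (ω : (Fin n → ℝ) → ℝ) (x : Fin n → ℝ) : ℝ :=
  sSup {r | ∃ y : Fin n → ℝ, r = ω y - ε⁻¹ * eucNorm (x - y) ^ 2}

/-- Inf-convolution `ω_ε(x) = inf_y (ω(y) + ε⁻¹|x − y|²)`. -/
def infConv (ε : ℝ) (ω : (Fin n → ℝ) → ℝ) (x : Fin n → ℝ) : ℝ :=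
  sInf {r | ∃ y : Fin n → ℝ, r = ω y + ε⁻¹ * eucNorm (x - y) ^ 2}

/-- `σ(ε) = C ε^{1/2}` with `C = (2‖ω‖_{L∞})^{1/2}`. -/
def sigCut (ω : (Fin n → ℝ) → ℝ) (ε : ℝ) : ℝ :=
  Real.sqrt (2 * ⨆ x : Fin n → ℝ, |ω x|) * Real.sqrt ε

/-- `U_{σ(ε)} = {x ∈ U : dist(x, ∂U) > σ(ε)}`. -/
def innerSet (U : Set (Fin n → ℝ)) (ω : (Fin n → ℝ) → ℝ) (ε : ℝ) : Set (Fin n → ℝ) :=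
  {x | x ∈ U ∧ sigCut ω ε < eInfDist x (frontier U)}

/- ===== auxiliary lemmas ===== -/

lemma eucNorm_nonneg (p : Fin n → ℝ) : 0 ≤ eucNorm p := Real.sqrt_nonneg _

lemma eucNorm_zero : eucNorm (0 : Fin n → ℝ) = 0 := by
  simp [eucNorm, sqNorm]

lemma eucNorm_sub_comm (a b : Fin n → ℝ) : eucNorm (a - b) = eucNorm (b - a) := by
  simp only [eucNorm, sqNorm]
  congr 1
  apply Finset.sum_congr rfl
  intro i _
  have : (a - b) i = -((b - a) i) := by simp
  rw [this, neg_sq]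

lemma eucNorm_smul (c : ℝ) (p : Fin n → ℝ) : eucNorm (c • p) = |c| * eucNorm p := by
  simp only [eucNorm, sqNorm, Pi.smul_apply, smul_eq_mul, mul_pow, ← Finset.mul_sum]
  rw [Real.sqrt_mul (sq_nonneg c), Real.sqrt_sq_eq_abs]

lemma eucNorm_eq_norm (p : Fin n → ℝ) :
    eucNorm p = ‖(WithLp.equiv 2 (Fin n → ℝ)).symm p‖ := by
  rw [EuclideanSpace.norm_eq]
  simp [eucNorm, sqNorm, sq_abs]

lemma eucNorm_triangle (a b : Fin n → ℝ) : eucNorm (a + b) ≤ eucNorm a + eucNorm b := by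
  simp only [eucNorm_eq_norm]
  have : (WithLp.equiv 2 (Fin n → ℝ)).symm (a + b)
      = (WithLp.equiv 2 (Fin n → ℝ)).symm a + (WithLp.equiv 2 (Fin n → ℝ)).symm b := rfl
  rw [this]; exact norm_add_le _ _

lemma abs_le_eucNorm (p : Fin n → ℝ) (i : Fin n) : |p i| ≤ eucNorm p := by
  rw [← Real.sqrt_sq_eq_abs]
  apply Real.sqrt_le_sqrt
  exact Finset.single_le_sum (fun j _ => sq_nonneg (p j)) (Finset.mem_univ i)

lemma continuous_eucNorm : Continuous (eucNorm (n := n)) := by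
  apply Real.continuous_sqrt.comp
  exact continuous_finset_sum _ (fun i _ => (continuous_apply i).pow 2)

lemma fderiv_shift {E F : Type*} [NormedAddCommGroup E] [NormedSpace ℝ E]
    [NormedAddCommGroup F] [NormedSpace ℝ F]
    (f : E → F) (c x : E) (hf : DifferentiableAt ℝ f (x + c)) :
    fderiv ℝ (fun y => f (y + c)) x = fderiv ℝ f (x + c) := by
  have h1 : HasFDerivAt (fun y : E => y + c) (ContinuousLinearMap.id ℝ E) x :=
    (hasFDerivAt_id x).add_const c
  simpa [Function.comp_def] using (hf.hasFDerivAt.comp x h1).fderiv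

lemma contDiff_shift (φ : (Fin n → ℝ) → ℝ) (c : Fin n → ℝ) (hφ : ContDiff ℝ (⊤ : ℕ∞) φ) :
    ContDiff ℝ (⊤ : ℕ∞) (fun y => φ (y + c)) :=
  hφ.comp (contDiff_id.add contDiff_const)

lemma gradv_shift (φ : (Fin n → ℝ) → ℝ) (hφ : ContDiff ℝ (⊤ : ℕ∞) φ) (c x : Fin n → ℝ) :
    gradv (fun y => φ (y + c)) x = gradv φ (x + c) := by
  funext i
  simp only [gradv]
  rw [fderiv_shift φ c x (hφ.differentiable (by norm_num) _)]

lemma hessv_shift (φ : (Fin n → ℝ) → ℝ) (hφ : ContDiff ℝ (⊤ : ℕ∞) φ) (c x : Fin n → ℝ) :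
    hessv (fun y => φ (y + c)) x = hessv φ (x + c) := by
  have hd : ContDiff ℝ (⊤ : ℕ∞) (fderiv ℝ φ) := (contDiff_infty_iff_fderiv.1 hφ).2
  funext i j
  simp only [hessv, Matrix.of_apply]
  have h1 : (fun y => fderiv ℝ (fun z => φ (z + c)) y (Pi.single j 1))
      = fun y => (fderiv ℝ φ (y + c)) (Pi.single j 1) := by
    funext y
    rw [fderiv_shift φ c y (hφ.differentiable (by norm_num) _)]
  rw [h1]
  have hg : ContDiff ℝ (⊤ : ℕ∞) (fun y => (fderiv ℝ φ y) (Pi.single j 1)) :=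
    hd.clm_apply contDiff_const
  rw [fderiv_shift (fun y => (fderiv ℝ φ y) (Pi.single j 1)) c x
    (hg.differentiable (by norm_num) _)]

lemma sigCut_nonneg (ω : (Fin n → ℝ) → ℝ) (ε : ℝ) : 0 ≤ sigCut ω ε :=
  mul_nonneg (Real.sqrt_nonneg _) (Real.sqrt_nonneg _)

lemma le_supConv (ω : (Fin n → ℝ) → ℝ) (ε M : ℝ) (hM : ∀ x, |ω x| ≤ M) (hε : 0 < ε)
    (z y : Fin n → ℝ) :
    ω y - ε⁻¹ * eucNorm (z - y) ^ 2 ≤ supConv ε ω z := by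
  apply le_csSup
  · refine ⟨M, ?_⟩
    rintro r ⟨y', rfl⟩
    have h1 : 0 ≤ ε⁻¹ * eucNorm (z - y') ^ 2 :=
      mul_nonneg (inv_nonneg.2 hε.le) (sq_nonneg _)
    linarith [(abs_le.1 (hM y')).2]
  · exact ⟨y, rfl⟩

lemma supConv_attained (ω : (Fin n → ℝ) → ℝ) (ε M : ℝ)
    (hωc : Continuous ω) (hM : ∀ x, |ω x| ≤ M) (hε : 0 < ε) (x : Fin n → ℝ) :
    ∃ y₀ : Fin n → ℝ, supConv ε ω x = ω y₀ - ε⁻¹ * eucNorm (x - y₀) ^ 2 ∧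
      eucNorm (x - y₀) ≤ sigCut ω ε := by
  set S : ℝ := ⨆ x : Fin n → ℝ, |ω x| with hSdef
  have hbdd : BddAbove (Set.range fun x : Fin n → ℝ => |ω x|) :=
    ⟨M, by rintro _ ⟨x, rfl⟩; exact hM x⟩
  have hS : ∀ y, |ω y| ≤ S := fun y => le_ciSup hbdd y
  have hS0 : 0 ≤ S := le_trans (abs_nonneg _) (hS x)
  set σ : ℝ := sigCut ω ε with hσdef
  have hσ0 : 0 ≤ σ := sigCut_nonneg ω ε
  have hσsq : σ ^ 2 = 2 * S * ε := by
    rw [hσdef, sigCut, mul_pow, Real.sq_sqrt (by linarith), Real.sq_sqrt hε.le]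
  set g : (Fin n → ℝ) → ℝ := fun y => ω y - ε⁻¹ * eucNorm (x - y) ^ 2 with hgdef
  have hgc : Continuous g := by
    apply hωc.sub
    exact continuous_const.mul ((continuous_eucNorm.comp
      (continuous_const.sub continuous_id)).pow 2)
  set B : Set (Fin n → ℝ) := {y | eucNorm (x - y) ≤ σ} with hBdef
  have hBclosed : IsClosed B := by
    have : Continuous fun y : Fin n → ℝ => eucNorm (x - y) :=
      continuous_eucNorm.comp (continuous_const.sub continuous_id)
    exact isClosed_le this continuous_const
  have hBsub : B ⊆ Metric.closedBall x σ := by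
    intro y hy
    rw [Metric.mem_closedBall, dist_eq_norm]
    rw [pi_norm_le_iff_of_nonneg hσ0]
    intro i
    calc ‖(y - x) i‖ ≤ eucNorm (y - x) := abs_le_eucNorm _ i
      _ = eucNorm (x - y) := eucNorm_sub_comm _ _
      _ ≤ σ := hy
  have hBcomp : IsCompact B := (isCompact_closedBall x σ).of_isClosed_subset hBclosed hBsub
  have hxB : x ∈ B := by simp [hBdef, sub_self, eucNorm_zero, hσ0]
  obtain ⟨y₀, hy₀B, hmax⟩ := hBcomp.exists_isMaxOn ⟨x, hxB⟩ hgc.continuousOn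
  have hub : ∀ r ∈ {r | ∃ y : Fin n → ℝ, r = ω y - ε⁻¹ * eucNorm (x - y) ^ 2}, r ≤ g y₀ := by
    rintro r ⟨y, rfl⟩
    by_cases hy : y ∈ B
    · exact hmax hy
    · have h1 : σ ≤ eucNorm (x - y) := le_of_not_ge hy
      have h2 : σ ^ 2 ≤ eucNorm (x - y) ^ 2 := pow_le_pow_left₀ hσ0 h1 2
      have h3 : 2 * S ≤ ε⁻¹ * eucNorm (x - y) ^ 2 := by
        rw [hσsq] at h2
        calc 2 * S = ε⁻¹ * (2 * S * ε) := by field_simp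
          _ ≤ _ := mul_le_mul_of_nonneg_left h2 (inv_nonneg.2 hε.le)
      have h4 : g x ≤ g y₀ := hmax hxB
      have h5 : g x = ω x := by simp [hgdef, sub_self, eucNorm_zero]
      have h6 := abs_le.1 (hS y)
      have h7 := abs_le.1 (hS x)
      calc ω y - ε⁻¹ * eucNorm (x - y) ^ 2 ≤ S - 2 * S := by linarith
        _ ≤ ω x := by linarith
        _ = g x := h5.symm
        _ ≤ g y₀ := h4
  refine ⟨y₀, ?_, hy₀B⟩
  apply le_antisymm
  · exact csSup_le ⟨ω x - ε⁻¹ * eucNorm (x - x) ^ 2, ⟨x, rfl⟩⟩ hub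
  · exact le_csSup ⟨g y₀, hub⟩ ⟨y₀, rfl⟩

lemma supConv_diff_le (ω : (Fin n → ℝ) → ℝ) (ε M : ℝ)
    (hωc : Continuous ω) (hM : ∀ x, |ω x| ≤ M) (hε : 0 < ε) (x x' : Fin n → ℝ) :
    supConv ε ω x - supConv ε ω x' ≤
      ε⁻¹ * (2 * sigCut ω ε * eucNorm (x - x') + eucNorm (x - x') ^ 2) := by
  obtain ⟨y₀, hEq, hDist⟩ := supConv_attained ω ε M hωc hM hε x
  have h1 := le_supConv ω ε M hM hε x' y₀
  have htri : eucNorm (x' - y₀) ≤ eucNorm (x' - x) + eucNorm (x - y₀) := by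
    have := eucNorm_triangle (x' - x) (x - y₀)
    simpa [sub_add_sub_cancel] using this
  have he : eucNorm (x' - x) = eucNorm (x - x') := eucNorm_sub_comm _ _
  set d := eucNorm (x - y₀) with hd
  set e := eucNorm (x - x') with heq
  have hd0 : 0 ≤ d := eucNorm_nonneg _
  have he0 : 0 ≤ e := eucNorm_nonneg _
  have he0' : 0 ≤ eucNorm (x' - y₀) := eucNorm_nonneg _
  have hεi : 0 ≤ ε⁻¹ := inv_nonneg.2 hε.le
  have h2 : eucNorm (x' - y₀) ^ 2 ≤ d ^ 2 + 2 * sigCut ω ε * e + e ^ 2 := by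
    rw [he] at htri
    nlinarith [hDist]
  nlinarith [h1, hEq]

lemma supConv_continuous (ω : (Fin n → ℝ) → ℝ) (ε M : ℝ)
    (hωc : Continuous ω) (hM : ∀ x, |ω x| ≤ M) (hε : 0 < ε) :
    Continuous (supConv ε ω) := by
  rw [continuous_iff_continuousAt]
  intro a
  rw [ContinuousAt, tendsto_iff_dist_tendsto_zero]
  set h : (Fin n → ℝ) → ℝ := fun x =>
    ε⁻¹ * (2 * sigCut ω ε * eucNorm (x - a) + eucNorm (x - a) ^ 2) with hh
  have hhc : Continuous h := by
    have h1 : Continuous fun x : Fin n → ℝ => eucNorm (x - a) :=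
      continuous_eucNorm.comp (continuous_id.sub continuous_const)
    exact continuous_const.mul ((continuous_const.mul h1).add (h1.pow 2))
  have hh0 : Tendsto h (nhds a) (nhds 0) := by
    have := hhc.tendsto a
    simpa [hh, sub_self, eucNorm_zero] using this
  apply squeeze_zero (fun x => dist_nonneg) _ hh0
  intro x
  rw [Real.dist_eq, abs_le]
  simp only [hh]
  constructor
  · have := supConv_diff_le ω ε M hωc hM hε a x
    rw [eucNorm_sub_comm a x] at this
    linarith
  · exact supConv_diff_le ω ε M hωc hM hε x a

lemma infConv_eq (ε : ℝ) (ω : (Fin n → ℝ) → ℝ) (x : Fin n → ℝ) :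
    infConv ε ω x = - supConv ε (fun y => -ω y) x := by
  have hset : -{r | ∃ y : Fin n → ℝ, r = ω y + ε⁻¹ * eucNorm (x - y) ^ 2}
      = {r | ∃ y : Fin n → ℝ, r = -ω y - ε⁻¹ * eucNorm (x - y) ^ 2} := by
    ext r
    simp only [Set.mem_neg, Set.mem_setOf_eq]
    constructor
    · rintro ⟨y, hy⟩; exact ⟨y, by linarith⟩
    · rintro ⟨y, hy⟩; exact ⟨y, by linarith⟩
  rw [infConv, Real.sInf_def, hset, supConv]

lemma sigCut_neg (ω : (Fin n → ℝ) → ℝ) (ε : ℝ) :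
    sigCut (fun y : Fin n → ℝ => -ω y) ε = sigCut ω ε := by
  unfold sigCut
  congr 2
  simp [abs_neg]

lemma infConv_le (ω : (Fin n → ℝ) → ℝ) (ε M : ℝ) (hM : ∀ x, |ω x| ≤ M) (hε : 0 < ε)
    (z y : Fin n → ℝ) :
    infConv ε ω z ≤ ω y + ε⁻¹ * eucNorm (z - y) ^ 2 := by
  rw [infConv_eq]
  have := le_supConv (fun y => -ω y) ε M (fun x => by simpa [abs_neg] using hM x) hε z y
  linarith

lemma infConv_attained (ω : (Fin n → ℝ) → ℝ) (ε M : ℝ)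
    (hωc : Continuous ω) (hM : ∀ x, |ω x| ≤ M) (hε : 0 < ε) (x : Fin n → ℝ) :
    ∃ y₀ : Fin n → ℝ, infConv ε ω x = ω y₀ + ε⁻¹ * eucNorm (x - y₀) ^ 2 ∧
      eucNorm (x - y₀) ≤ sigCut ω ε := by
  obtain ⟨y₀, hEq, hDist⟩ := supConv_attained (fun y => -ω y) ε M hωc.neg
    (fun x => by simpa [abs_neg] using hM x) hε x
  rw [sigCut_neg] at hDist
  refine ⟨y₀, ?_, hDist⟩
  rw [infConv_eq, hEq]
  ring

lemma infConv_continuous (ω : (Fin n → ℝ) → ℝ) (ε M : ℝ)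
    (hωc : Continuous ω) (hM : ∀ x, |ω x| ≤ M) (hε : 0 < ε) :
    Continuous (infConv ε ω) := by
  have h := (supConv_continuous (fun y => -ω y) ε M hωc.neg
    (fun x => by simpa [abs_neg] using hM x) hε).neg
  have : infConv ε ω = fun x => - supConv ε (fun y => -ω y) x := funext (infConv_eq ε ω)
  rw [this]
  exact h

lemma eInfDist_le {s : Set (Fin n → ℝ)} (x : Fin n → ℝ) {z : Fin n → ℝ} (hz : z ∈ s) :
    eInfDist x s ≤ eucNorm (x - z) := by
  apply csInf_le
  · refine ⟨0, ?_⟩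
    rintro r ⟨y, hy, rfl⟩
    exact eucNorm_nonneg _
  · exact ⟨z, hz, rfl⟩

lemma segment_frontier {U : Set (Fin n → ℝ)} (hUo : IsOpen U) {x y : Fin n → ℝ}
    (hx : x ∈ U) (hy : y ∉ U) :
    ∃ z ∈ frontier U, eucNorm (x - z) ≤ eucNorm (x - y) := by
  have hseg : ∀ z ∈ segment ℝ x y, eucNorm (x - z) ≤ eucNorm (x - y) := by
    rintro z ⟨a, b, ha, hb, hab, rfl⟩
    have hxz : x - (a • x + b • y) = b • (x - y) := by
      funext i
      simp only [Pi.sub_apply, Pi.add_apply, Pi.smul_apply, smul_eq_mul]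
      have : a = 1 - b := by linarith
      rw [this]; ring
    rw [hxz, eucNorm_smul, abs_of_nonneg hb]
    have hb1 : b ≤ 1 := by linarith
    nlinarith [eucNorm_nonneg (x - y)]
  by_cases hyc : y ∈ closure U
  · refine ⟨y, ⟨hyc, ?_⟩, hseg y (right_mem_segment ℝ x y)⟩
    rwa [hUo.interior_eq]
  · by_contra hcon
    push_neg at hcon
    have hnofront : ∀ z ∈ segment ℝ x y, z ∉ frontier U := fun z hz hzf =>
      absurd (hseg z hz) (not_le.2 (hcon z hzf))
    have hpre : IsPreconnected (segment ℝ x y) := (convex_segment x y).isPreconnected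
    have hsub : segment ℝ x y ⊆ (interior U) ∪ (closure U)ᶜ := by
      intro z hz
      by_cases hzc : z ∈ closure U
      · left
        by_contra hzi
        exact hnofront z hz ⟨hzc, hzi⟩
      · right; exact hzc
    have h1 : (segment ℝ x y ∩ interior U).Nonempty :=
      ⟨x, left_mem_segment ℝ x y, by rwa [hUo.interior_eq]⟩
    have h2 : (segment ℝ x y ∩ (closure U)ᶜ).Nonempty :=
      ⟨y, right_mem_segment ℝ x y, hyc⟩
    obtain ⟨z, _, hz2, hz3⟩ := hpre (interior U) (closure U)ᶜ isOpen_interior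
      isClosed_closure.isOpen_compl hsub h1 h2
    exact hz3 (subset_closure (interior_subset hz2))

lemma mem_of_ball (U : Set (Fin n → ℝ)) (hUo : IsOpen U) (ω : (Fin n → ℝ) → ℝ) (ε : ℝ)
    {x y : Fin n → ℝ} (hx : x ∈ innerSet U ω ε) (hxy : eucNorm (x - y) ≤ sigCut ω ε) :
    y ∈ U := by
  by_contra hy
  obtain ⟨z, hz, hzle⟩ := segment_frontier hUo hx.1 hy
  have := eInfDist_le x hz
  have h2 := hx.2
  linarith


/-- If the bounded continuous `ω` is a weak subsolution of
`F(γ D²ω γ) = 1` in the open set `U`, then for every `ε > 0` the sup-convolution `ω^ε` is a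
weak subsolution in `U_{σ(ε)}`; similarly, inf-convolutions of weak supersolutions are weak
supersolutions in `U_{σ(ε)}`. -/
theorem stmt13 {n : ℕ} (hn : 2 ≤ n) (K : Set (Fin n → ℝ)) (f : (Fin n → ℝ) → ℝ)
    (hK : GoodCone K) (hf : GoodF K f)
    (ω : (Fin n → ℝ) → ℝ) (hωc : Continuous ω) (M : ℝ) (hM : ∀ x, |ω x| ≤ M)
    (U : Set (Fin n → ℝ)) (hUo : IsOpen U) :
    ∀ ε : ℝ, 0 < ε →
      (EWeakSub K f U ω → EWeakSub K f (innerSet U ω ε) (supConv ε ω)) ∧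
      (EWeakSuper K f U ω → EWeakSuper K f (innerSet U ω ε) (infConv ε ω)) := by
  intro ε hε
  constructor
  · rintro ⟨hωU, hωsub⟩
    refine ⟨(supConv_continuous ω ε M hωc hM hε).continuousOn, ?_⟩
    intro D hDo hDsub φ hφadm x₀ hx₀D hmax
    obtain ⟨y₀, hatt, hdist⟩ := supConv_attained ω ε M hωc hM hε x₀
    have hx₀I : x₀ ∈ innerSet U ω ε := hDsub hx₀D
    have hy₀U : y₀ ∈ U := mem_of_ball U hUo ω ε hx₀I hdist
    set c : Fin n → ℝ := x₀ - y₀ with hc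
    have hyc : y₀ + c = x₀ := by rw [hc]; abel
    have hψg : ∀ x, gradv (fun y => φ (y + c)) x = gradv φ (x + c) :=
      fun x => gradv_shift φ hφadm.1 c x
    have hψh : ∀ x, hessv (fun y => φ (y + c)) x = hessv φ (x + c) :=
      fun x => hessv_shift φ hφadm.1 c x
    have hD'o : IsOpen (((fun y => y + c) ⁻¹' D) ∩ U) :=
      (hDo.preimage (continuous_id.add continuous_const)).inter hUo
    have hψadm : EAdmissible K f (fun y => φ (y + c)) (((fun y => y + c) ⁻¹' D) ∩ U) := by
      refine ⟨contDiff_shift φ c hφadm.1, ?_⟩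
      intro x hx
      rw [hψg x, hψh x]
      exact hφadm.2 _ hx.1
    have hy₀D' : y₀ ∈ ((fun y => y + c) ⁻¹' D) ∩ U := by
      refine ⟨?_, hy₀U⟩
      simp only [Set.mem_preimage]
      rw [hyc]
      exact hx₀D
    have hmax' : IsLocalMax (fun y => ω y - (fun y => φ (y + c)) y) y₀ := by
      have hmap : Tendsto (fun y : Fin n → ℝ => y + c) (nhds y₀) (nhds (y₀ + c)) :=
        (continuous_id.add continuous_const).tendsto y₀
      rw [hyc] at hmap
      filter_upwards [hmap.eventually hmax] with y hy
      have hy' : supConv ε ω (y + c) - φ (y + c) ≤ supConv ε ω x₀ - φ x₀ := hy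
      have h1 : ω y - ε⁻¹ * eucNorm ((y + c) - y) ^ 2 ≤ supConv ε ω (y + c) :=
        le_supConv ω ε M hM hε (y + c) y
      have h2 : (y + c) - y = c := by abel
      rw [h2] at h1
      have h3 : supConv ε ω x₀ = ω y₀ - ε⁻¹ * eucNorm c ^ 2 := by rw [hatt]
      show ω y - φ (y + c) ≤ ω y₀ - φ (y₀ + c)
      rw [hyc]
      linarith
    have hconc := hωsub (((fun y => y + c) ⁻¹' D) ∩ U) hD'o Set.inter_subset_right
      (fun y => φ (y + c)) hψadm y₀ hy₀D' hmax'
    rw [hψg y₀, hψh y₀, hyc] at hconc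
    exact hconc
  · rintro ⟨hωU, hωsuper⟩
    refine ⟨(infConv_continuous ω ε M hωc hM hε).continuousOn, ?_⟩
    intro D hDo hDsub φ hφadm x₀ hx₀D hmin
    obtain ⟨y₀, hatt, hdist⟩ := infConv_attained ω ε M hωc hM hε x₀
    have hx₀I : x₀ ∈ innerSet U ω ε := hDsub hx₀D
    have hy₀U : y₀ ∈ U := mem_of_ball U hUo ω ε hx₀I hdist
    set c : Fin n → ℝ := x₀ - y₀ with hc
    have hyc : y₀ + c = x₀ := by rw [hc]; abel
    have hψg : ∀ x, gradv (fun y => φ (y + c)) x = gradv φ (x + c) :=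
      fun x => gradv_shift φ hφadm.1 c x
    have hψh : ∀ x, hessv (fun y => φ (y + c)) x = hessv φ (x + c) :=
      fun x => hessv_shift φ hφadm.1 c x
    have hD'o : IsOpen (((fun y => y + c) ⁻¹' D) ∩ U) :=
      (hDo.preimage (continuous_id.add continuous_const)).inter hUo
    have hψadm : EAdmissible K f (fun y => φ (y + c)) (((fun y => y + c) ⁻¹' D) ∩ U) := by
      refine ⟨contDiff_shift φ c hφadm.1, ?_⟩
      intro x hx
      rw [hψg x, hψh x]
      exact hφadm.2 _ hx.1
    have hy₀D' : y₀ ∈ ((fun y => y + c) ⁻¹' D) ∩ U := by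
      refine ⟨?_, hy₀U⟩
      simp only [Set.mem_preimage]
      rw [hyc]
      exact hx₀D
    have hmin' : IsLocalMin (fun y => ω y - (fun y => φ (y + c)) y) y₀ := by
      have hmap : Tendsto (fun y : Fin n → ℝ => y + c) (nhds y₀) (nhds (y₀ + c)) :=
        (continuous_id.add continuous_const).tendsto y₀
      rw [hyc] at hmap
      filter_upwards [hmap.eventually hmin] with y hy
      have hy' : infConv ε ω x₀ - φ x₀ ≤ infConv ε ω (y + c) - φ (y + c) := hy
      have h1 : infConv ε ω (y + c) ≤ ω y + ε⁻¹ * eucNorm ((y + c) - y) ^ 2 :=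
        infConv_le ω ε M hM hε (y + c) y
      have h2 : (y + c) - y = c := by abel
      rw [h2] at h1
      have h3 : infConv ε ω x₀ = ω y₀ + ε⁻¹ * eucNorm c ^ 2 := by rw [hatt]
      show ω y₀ - φ (y₀ + c) ≤ ω y - φ (y + c)
      rw [hyc]
      linarith
    have hconc := hωsuper (((fun y => y + c) ⁻¹' D) ∩ U) hD'o Set.inter_subset_right
      (fun y => φ (y + c)) hψadm y₀ hy₀D' hmin'
    rw [hψg y₀, hψh y₀, hyc] at hconc
    exact hconc
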